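/- arXiv:2001.00158 — 8 statements merged into one kernel-verified Lean document; each statement's English description precedes it below -/
import Mathlib

section
/- Let q = 2^m and let U be the set of u in GF(q^2) with u^{q+1} = 1. For any two distinct elements u1, u2 of U, the element a = u1*u2/(u1^2 + u2^2) lies in GF(q) and has absolute trace Tr_{GF(q)/GF(2)}(a) = 1. -/
/-!
Put `x = u₁ / (u₁ + u₂)`, so that `x + 1 = u₂ / (u₁ + u₂)` in characteristic 2 and
`a = u₁ u₂ / (u₁ + u₂)² = x² + x`. On `U` the Frobenius `u ↦ u^q` is inversion, whence
`x^q = u₁⁻¹ / (u₁⁻¹ + u₂⁻¹) = x + 1`. Then `a^q = (x + 1)² + (x + 1) = a`, and the trace of the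
Artin–Schreier value `x² + x` telescopes to `x^q + x = 1`.
-/

open Finset

section CharTwo

variable {R : Type*} [CommRing R] [CharP R 2]

lemma sq_add_self_pow_two_pow (x : R) (i : ℕ) :
    (x ^ 2 + x) ^ 2 ^ i = x ^ 2 ^ (i + 1) + x ^ 2 ^ i := by
  rw [add_pow_char_pow, ← pow_mul, ← pow_succ']

lemma sum_range_sq_add_self_pow_two_pow (x : R) (m : ℕ) :
    ∑ i ∈ range m, (x ^ 2 + x) ^ 2 ^ i = x ^ 2 ^ m + x := by
  simp_rw [sq_add_self_pow_two_pow, ← CharTwo.sub_eq_add]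
  rw [sum_range_sub (fun i ↦ x ^ 2 ^ i), pow_zero, pow_one]

lemma sq_add_self_pow_two_pow_of_pow_eq_add_one {x : R} {m : ℕ} (hx : x ^ 2 ^ m = x + 1) :
    (x ^ 2 + x) ^ 2 ^ m = x ^ 2 + x := by
  rw [add_pow_char_pow, ← pow_mul, mul_comm, pow_mul, hx, CharTwo.add_sq]
  linear_combination CharTwo.two_eq_zero (R := R)

end CharTwo

lemma pow_eq_inv_of_pow_succ_eq_one {G : Type*} [DivisionMonoid G] {u : G} {n : ℕ}
    (hu : u ^ (n + 1) = 1) : u ^ n = u⁻¹ :=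
  eq_inv_of_mul_eq_one_left (pow_succ u n ▸ hu)

section CharTwoField

variable {F : Type*} [Field F] [CharP F 2]

lemma div_add_one_eq_div_add {u₁ u₂ : F} (hs : u₁ + u₂ ≠ 0) :
    u₁ / (u₁ + u₂) + 1 = u₂ / (u₁ + u₂) := by
  field_simp
  linear_combination CharTwo.two_eq_zero (R := F) * u₁

lemma mul_div_sq_add_sq_eq {u₁ u₂ : F} (hs : u₁ + u₂ ≠ 0) :
    u₁ * u₂ / (u₁ ^ 2 + u₂ ^ 2) = (u₁ / (u₁ + u₂)) ^ 2 + u₁ / (u₁ + u₂) := by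
  rw [← CharTwo.add_sq]
  field_simp
  linear_combination -u₁ ^ 2 * CharTwo.two_eq_zero (R := F)

lemma div_add_pow_two_pow_of_pow_two_pow_eq_inv {u₁ u₂ : F} {m : ℕ} (hs : u₁ + u₂ ≠ 0)
    (hu₁ : u₁ ≠ 0) (hu₂ : u₂ ≠ 0) (h₁ : u₁ ^ 2 ^ m = u₁⁻¹) (h₂ : u₂ ^ 2 ^ m = u₂⁻¹) :
    (u₁ / (u₁ + u₂)) ^ 2 ^ m = u₁ / (u₁ + u₂) + 1 := by
  rw [div_add_one_eq_div_add hs, div_pow, add_pow_char_pow, h₁, h₂]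
  field_simp
  rw [add_comm u₂ u₁, div_self hs]

end CharTwoField

theorem stmt_0_general (m : ℕ) (F : Type*) [Field F] [Fintype F]
    (hF : Fintype.card F = 2 ^ (2 * m))
    (u1 u2 : F) (h1 : u1 ^ (2 ^ m + 1) = 1) (h2 : u2 ^ (2 ^ m + 1) = 1)
    (hne : u1 ≠ u2) :
    (u1 * u2 / (u1 ^ 2 + u2 ^ 2)) ^ (2 ^ m) = u1 * u2 / (u1 ^ 2 + u2 ^ 2) ∧
    ∑ i ∈ Finset.range m, (u1 * u2 / (u1 ^ 2 + u2 ^ 2)) ^ (2 ^ i) = 1 := by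
  have : CharP F 2 := charP_of_card_eq_prime_pow hF
  have hu₁ : u1 ≠ 0 := by rintro rfl; simp at h1
  have hu₂ : u2 ≠ 0 := by rintro rfl; simp at h2
  have hs : u1 + u2 ≠ 0 := fun h ↦ hne (CharTwo.add_eq_zero.mp h)
  have hx := div_add_pow_two_pow_of_pow_two_pow_eq_inv hs hu₁ hu₂
    (pow_eq_inv_of_pow_succ_eq_one h1) (pow_eq_inv_of_pow_succ_eq_one h2)
  rw [mul_div_sq_add_sq_eq hs]
  refine ⟨sq_add_self_pow_two_pow_of_pow_eq_add_one hx, ?_⟩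
  rw [sum_range_sq_add_self_pow_two_pow, hx, add_right_comm, CharTwo.add_self_eq_zero, zero_add]

/-- Let `q = 2^m` and let `U` be the set of `u` in `GF(q^2)` with `u^(q+1) = 1`.
For any two distinct `u1 u2 ∈ U`, `a = u1*u2/(u1^2+u2^2)` lies in `GF(q)`
(i.e. `a^q = a`) and its absolute trace `∑_{i<m} a^(2^i)` equals `1`. -/
theorem stmt_0 (m : ℕ) (hm : 0 < m) (F : Type*) [Field F] [Fintype F]
    (hF : Fintype.card F = 2 ^ (2 * m))
    (u1 u2 : F) (h1 : u1 ^ (2 ^ m + 1) = 1) (h2 : u2 ^ (2 ^ m + 1) = 1)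
    (hne : u1 ≠ u2) :
    (u1 * u2 / (u1 ^ 2 + u2 ^ 2)) ^ (2 ^ m) = u1 * u2 / (u1 ^ 2 + u2 ^ 2) ∧
    ∑ i ∈ Finset.range m, (u1 * u2 / (u1 ^ 2 + u2 ^ 2)) ^ (2 ^ i) = 1 :=
  stmt_0_general m F hF u1 u2 h1 h2 hne
end

section
/- Let q = 2^m and let U be the group of (q+1)-st roots of unity in GF(q^2). For any four pairwise distinct elements u1, u2, u3, u4 of U, the sum u1 + u2 + u3 + u4 is nonzero. -/
/-!
Write `q = 2^m`. On `U` the Frobenius `x ↦ x^q` is inversion, and it is additive. If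
`a + b + c + d = 0` then, in characteristic 2, `a + b = c + d`; applying Frobenius gives
`(a + b)/(ab) = (c + d)/(cd)`, and `a + b ≠ 0` because `a ≠ b`, so `ab = cd`. Likewise `ac = bd`.
Multiplying, `a² = d²`, hence `a = d` since squaring is injective in characteristic 2.
-/

theorem pow_eq_inv_of_pow_succ_eq_one_s1 {G₀ : Type*} [GroupWithZero G₀] {a : G₀} {n : ℕ}
    (h : a ^ (n + 1) = 1) : a ^ n = a⁻¹ :=
  eq_inv_of_mul_eq_one_left (by rwa [← pow_succ])

theorem ne_zero_of_pow_succ_eq_one {M₀ : Type*} [MonoidWithZero M₀] [NoZeroDivisors M₀]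
    [Nontrivial M₀] {a : M₀} {n : ℕ} (h : a ^ (n + 1) = 1) : a ≠ 0 := by
  rintro rfl
  simp at h

theorem mul_eq_mul_of_add_eq_add_of_pow_succ_eq_one {F : Type*} [Field F] (p k : ℕ)
    [ExpChar F p] {a b c d : F} (ha : a ^ (p ^ k + 1) = 1) (hb : b ^ (p ^ k + 1) = 1)
    (hc : c ^ (p ^ k + 1) = 1) (hd : d ^ (p ^ k + 1) = 1) (hab : a + b ≠ 0)
    (hsum : a + b = c + d) : a * b = c * d := by
  have hinv : a⁻¹ + b⁻¹ = c⁻¹ + d⁻¹ := by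
    rw [← pow_eq_inv_of_pow_succ_eq_one_s1 ha, ← pow_eq_inv_of_pow_succ_eq_one_s1 hb,
      ← pow_eq_inv_of_pow_succ_eq_one_s1 hc, ← pow_eq_inv_of_pow_succ_eq_one_s1 hd,
      ← add_pow_expChar_pow, ← add_pow_expChar_pow, hsum]
  rw [inv_add_inv (ne_zero_of_pow_succ_eq_one ha) (ne_zero_of_pow_succ_eq_one hb),
    inv_add_inv (ne_zero_of_pow_succ_eq_one hc) (ne_zero_of_pow_succ_eq_one hd), ← hsum,
    div_eq_mul_inv, div_eq_mul_inv] at hinv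
  exact inv_inj.mp (mul_left_cancel₀ hab hinv)

theorem add_add_add_ne_zero_of_pow_succ_eq_one {F : Type*} [Field F] [CharP F 2] (k : ℕ)
    {a b c d : F} (ha : a ^ (2 ^ k + 1) = 1) (hb : b ^ (2 ^ k + 1) = 1)
    (hc : c ^ (2 ^ k + 1) = 1) (hd : d ^ (2 ^ k + 1) = 1)
    (hab : a ≠ b) (hac : a ≠ c) (had : a ≠ d) : a + b + c + d ≠ 0 := by
  intro hsum
  have hab_cd : a * b = c * d :=
    mul_eq_mul_of_add_eq_add_of_pow_succ_eq_one 2 k ha hb hc hd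
      (mt CharTwo.add_eq_zero.mp hab) (CharTwo.add_eq_zero.mp (by linear_combination hsum))
  have hac_bd : a * c = b * d :=
    mul_eq_mul_of_add_eq_add_of_pow_succ_eq_one 2 k ha hc hb hd
      (mt CharTwo.add_eq_zero.mp hac) (CharTwo.add_eq_zero.mp (by linear_combination hsum))
  have hbc : b * c ≠ 0 :=
    mul_ne_zero (ne_zero_of_pow_succ_eq_one hb) (ne_zero_of_pow_succ_eq_one hc)
  have hsq : a ^ 2 = d ^ 2 :=
    mul_right_cancel₀ hbc (by linear_combination a * c * hab_cd + c * d * hac_bd)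
  exact had (CharTwo.sq_injective hsq)

theorem charP_two_of_card_eq_two_pow {F : Type*} [Field F] [Fintype F] {n : ℕ} (hn : 0 < n)
    (hF : Fintype.card F = 2 ^ n) : CharP F 2 :=
  ringChar.of_eq (FiniteField.even_card_iff_char_two.mpr (by
    rw [hF, Nat.pow_mod]
    simp [hn.ne']))

theorem stmt_1_general (m : ℕ) (hm : 0 < m) (F : Type*) [Field F] [Fintype F]
    (hF : Fintype.card F = 2 ^ (2 * m))
    (u1 u2 u3 u4 : F)
    (h1 : u1 ^ (2 ^ m + 1) = 1) (h2 : u2 ^ (2 ^ m + 1) = 1)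
    (h3 : u3 ^ (2 ^ m + 1) = 1) (h4 : u4 ^ (2 ^ m + 1) = 1)
    (h12 : u1 ≠ u2) (h13 : u1 ≠ u3) (h14 : u1 ≠ u4) :
    u1 + u2 + u3 + u4 ≠ 0 := by
  have := charP_two_of_card_eq_two_pow (by omega) hF
  exact add_add_add_ne_zero_of_pow_succ_eq_one m h1 h2 h3 h4 h12 h13 h14

/-- For four pairwise distinct `(q+1)`-st roots of unity in `GF(q^2)`, `q = 2^m`,
their sum is nonzero. -/
theorem stmt_1 (m : ℕ) (hm : 0 < m) (F : Type*) [Field F] [Fintype F]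
    (hF : Fintype.card F = 2 ^ (2 * m))
    (u1 u2 u3 u4 : F)
    (h1 : u1 ^ (2 ^ m + 1) = 1) (h2 : u2 ^ (2 ^ m + 1) = 1)
    (h3 : u3 ^ (2 ^ m + 1) = 1) (h4 : u4 ^ (2 ^ m + 1) = 1)
    (h12 : u1 ≠ u2) (h13 : u1 ≠ u3) (h14 : u1 ≠ u4)
    (h23 : u2 ≠ u3) (h24 : u2 ≠ u4) (h34 : u3 ≠ u4) :
    u1 + u2 + u3 + u4 ≠ 0 :=
  stmt_1_general m hm F hF u1 u2 u3 u4 h1 h2 h3 h4 h12 h13 h14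
end

section
/- Let q = 2^m with m even, and let U be the group of (q+1)-st roots of unity in GF(q^2). For any three pairwise distinct elements u1, u2, u3 of U, with s1 = u1+u2+u3, s2 = u1u2+u2u3+u3u1, s3 = u1u2u3, one has s2^2 + s1*s3 ≠ 0. -/
/-!
In characteristic 2 the relation reads `s2² = s1 s3`. The Frobenius `x ↦ x ^ q` inverts every
element of `U`, so it sends `s1, s2, s3` to `s2 / s3, s1 / s3, 1 / s3`; applied to the relation
it gives `s1² = s2`. In characteristic 2 the cubic with roots `u1, u2, u3` is then
`(x + s1)³ + s1³ + s3`, and `s1 (s1³ + s3) = s2² + s1 s3 = 0`: either `s1 = 0` and all `uᵢ` have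
the same cube, or all `uᵢ` equal `s1`. In both cases `u1 / u2` is a cube root of unity in `U`,
hence `1`, because `3` does not divide `q + 1` when `m` is even.
-/

theorem Nat.coprime_three_two_pow_add_one {m : ℕ} (hm : Even m) : Nat.Coprime 3 (2 ^ m + 1) := by
  obtain ⟨k, rfl⟩ := hm
  have h4 : (2 ^ 2) ^ k % 3 = 1 := by rw [Nat.pow_mod]; simp
  rw [← two_mul, pow_mul, Nat.Prime.coprime_iff_not_dvd Nat.prime_three]
  omega

theorem eq_of_pow_eq_of_pow_eq_one_of_coprime {G₀ : Type*} [CommGroupWithZero G₀] {x y : G₀}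
    {k n : ℕ} (hk : x ^ k = y ^ k) (hx : x ^ n = 1) (hy : y ^ n = 1) (hkn : k.Coprime n) :
    x = y := by
  rcases eq_or_ne n 0 with rfl | hn
  · rw [Nat.coprime_zero_right] at hkn
    simpa [hkn] using hk
  have hy0 : y ≠ 0 := by rintro rfl; simp [hn] at hy
  rw [← div_eq_one_iff_eq hy0, ← pow_eq_one_iff_of_coprime hkn, div_pow, div_pow, hk, hx, hy,
    div_self (pow_ne_zero k hy0), div_one]
  exact ⟨rfl, rfl⟩

section

variable {F : Type*} [Field F] {u1 u2 u3 : F}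

theorem sq_add_add_eq_of_map_eq_inv (φ : F →+* F) (hu1 : u1 ≠ 0) (hu2 : u2 ≠ 0) (hu3 : u3 ≠ 0)
    (hφ1 : φ u1 = u1⁻¹) (hφ2 : φ u2 = u2⁻¹) (hφ3 : φ u3 = u3⁻¹)
    (h : (u1 * u2 + u2 * u3 + u3 * u1) ^ 2 = (u1 + u2 + u3) * (u1 * u2 * u3)) :
    (u1 + u2 + u3) ^ 2 = u1 * u2 + u2 * u3 + u3 * u1 := by
  have hφ := congrArg φ h
  simp only [map_add, map_mul, map_pow, hφ1, hφ2, hφ3] at hφ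
  field_simp at hφ
  linear_combination hφ

theorem pow_three_eq_pow_three_of_sq_eq [CharP F 2]
    (hsq : (u1 + u2 + u3) ^ 2 = u1 * u2 + u2 * u3 + u3 * u1)
    (h : (u1 * u2 + u2 * u3 + u3 * u1) ^ 2 = (u1 + u2 + u3) * (u1 * u2 * u3)) :
    u1 ^ 3 = u2 ^ 3 := by
  set s1 := u1 + u2 + u3
  set s2 := u1 * u2 + u2 * u3 + u3 * u1
  have h2 : (2 : F) = 0 := CharTwo.two_eq_zero
  have hcube1 : (u1 + s1) ^ 3 = s1 ^ 3 + u1 * u2 * u3 := by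
    linear_combination 3 * u1 * hsq + u1 * (2 * u1 * s1 + s2) * h2
  have hcube2 : (u2 + s1) ^ 3 = s1 ^ 3 + u1 * u2 * u3 := by
    linear_combination 3 * u2 * hsq + u2 * (2 * u2 * s1 + s2) * h2
  rcases eq_or_ne s1 0 with hs0 | hs0
  · simpa [hs0] using hcube1.trans hcube2.symm
  have hs3 : u1 * u2 * u3 = s1 ^ 3 :=
    mul_left_cancel₀ hs0 (by linear_combination -h - (s1 ^ 2 + s2) * hsq)
  have hroot : ∀ u : F, (u + s1) ^ 3 = s1 ^ 3 + u1 * u2 * u3 → u = s1 := fun u hu => by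
    rw [hs3, ← two_mul, h2, zero_mul, pow_eq_zero_iff three_ne_zero] at hu
    linear_combination hu - s1 * h2
  rw [hroot u1 hcube1, hroot u2 hcube2]

end

theorem stmt_6_general (m : ℕ) (hme : Even m) (F : Type*) [Field F] [Fintype F]
    (hF : Fintype.card F = 2 ^ (2 * m))
    (u1 u2 u3 : F)
    (h1 : u1 ^ (2 ^ m + 1) = 1) (h2 : u2 ^ (2 ^ m + 1) = 1)
    (h3 : u3 ^ (2 ^ m + 1) = 1)
    (h12 : u1 ≠ u2) :
    (u1 * u2 + u2 * u3 + u3 * u1) ^ 2 + (u1 + u2 + u3) * (u1 * u2 * u3) ≠ 0 := by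
  have : CharP F 2 := charP_of_card_eq_prime_pow hF
  have hne (u : F) (hu : u ^ (2 ^ m + 1) = 1) : u ≠ 0 := by
    rintro rfl
    simp at hu
  have hinv (u : F) (hu : u ^ (2 ^ m + 1) = 1) : iterateFrobenius F 2 m u = u⁻¹ :=
    eq_inv_of_mul_eq_one_left (by rwa [iterateFrobenius_def, ← pow_succ])
  intro h
  have hE := CharTwo.add_eq_zero.mp h
  have hsq := sq_add_add_eq_of_map_eq_inv (iterateFrobenius F 2 m) (hne _ h1) (hne _ h2)
    (hne _ h3) (hinv _ h1) (hinv _ h2) (hinv _ h3) hE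
  exact h12 <| eq_of_pow_eq_of_pow_eq_one_of_coprime (pow_three_eq_pow_three_of_sq_eq hsq hE)
    h1 h2 (Nat.coprime_three_two_pow_add_one hme)

/-- For `q = 2^m`, `m` even, and pairwise distinct `(q+1)`-st roots of unity
`u1, u2, u3` in `GF(q^2)`: `s2^2 + s1*s3 ≠ 0`. -/
theorem stmt_6 (m : ℕ) (hm : 0 < m) (hme : Even m) (F : Type*) [Field F] [Fintype F]
    (hF : Fintype.card F = 2 ^ (2 * m))
    (u1 u2 u3 : F)
    (h1 : u1 ^ (2 ^ m + 1) = 1) (h2 : u2 ^ (2 ^ m + 1) = 1)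
    (h3 : u3 ^ (2 ^ m + 1) = 1)
    (h12 : u1 ≠ u2) (h13 : u1 ≠ u3) (h23 : u2 ≠ u3) :
    (u1 * u2 + u2 * u3 + u3 * u1) ^ 2 + (u1 + u2 + u3) * (u1 * u2 * u3) ≠ 0 :=
  stmt_6_general m hme F hF u1 u2 u3 h1 h2 h3 h12
end

section
/- Let q = 2^m and let U be the group of (q+1)-st roots of unity in GF(q^2). Let u1, u2, u3 be pairwise distinct elements of U such that with s1, s2, s3 the elementary symmetric polynomials, the products (s1^2+s2)(s1*s2+s3)(s2^2+s1*s3) ≠ 0. Set a = (s1*s2+s3)/(s1^2+s2) and b = (s2^2+s1*s3)/(s1^2+s2). Then b ∈ U, b/a^2 ∈ GF(q), and Tr_{GF(q)/GF(2)}(b/a^2) ≡ 1 + m (mod 2). -/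
/-!
On `U` the Frobenius `σ x = x ^ q` is inversion, so it acts on the elementary symmetric functions
by `s1 ↦ s2 / s3`, `s2 ↦ s1 / s3`, `s3 ↦ 1 / s3`. Up to the common factor `s3⁻²` it therefore
swaps `s1^2 + s2` and `s2^2 + s1 s3` and fixes `s1 s2 + s3`, whence `b ^ q = b⁻¹`.

In characteristic 2, `b / a^2 = w^2 + w + 1` for `w = P / (s1 s2 + s3)` with the cyclic sum
`P = u1 u2^2 + u2 u3^2 + u3 u1^2 + u1 u2 u3`. Up to `s3⁻²`, σ sends `P` to the reversed cyclic sum,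
which is `P + s1 s2 + s3`, so `w ^ q = w + 1`. Hence `b / a^2` is fixed by σ, and its trace
telescopes (Artin–Schreier): `Tr(w^2 + w + 1) = w ^ q + w + m = 1 + m`.
-/

open Finset

section ArtinSchreier

variable {R : Type*} [CommRing R] {p : ℕ} [Fact p.Prime] [CharP R p]

theorem sum_range_pow_char_sub_self_pow_char_pow (x : R) (m : ℕ) :
    ∑ i ∈ range m, (x ^ p - x) ^ p ^ i = x ^ p ^ m - x := by
  have hterm (i : ℕ) : (x ^ p - x) ^ p ^ i = x ^ p ^ (i + 1) - x ^ p ^ i := by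
    rw [sub_pow_char_pow, ← pow_mul, pow_succ', mul_comm]
  simp_rw [hterm]
  rw [sum_range_sub (fun i => x ^ p ^ i), pow_zero, pow_one]

theorem pow_char_sub_self_add_one_pow_char_pow {w : R} {m : ℕ} (hw : w ^ p ^ m = w + 1) :
    (w ^ p - w + 1) ^ p ^ m = w ^ p - w + 1 := by
  rw [add_pow_char_pow, sub_pow_char_pow, one_pow, ← pow_mul, mul_comm, pow_mul, hw,
    add_pow_char, one_pow]
  ring

theorem sum_range_pow_char_sub_self_add_one_pow_char_pow {w : R} {m : ℕ}
    (hw : w ^ p ^ m = w + 1) :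
    ∑ i ∈ range m, (w ^ p - w + 1) ^ p ^ i = 1 + m := by
  simp_rw [add_pow_char_pow, one_pow]
  rw [sum_add_distrib, sum_range_pow_char_sub_self_pow_char_pow, hw]
  simp

end ArtinSchreier

section Conjugation

variable {F : Type*} [Field F] (σ : F →+* F)

theorem map_div_mul_div_eq_one {x y c : F} (hx : σ x * c = y) (hy : σ y * c = x)
    (hx0 : x ≠ 0) (hy0 : y ≠ 0) : σ (y / x) * (y / x) = 1 := by
  have hc : c ≠ 0 := by rintro rfl; exact hy0 (by simpa using hx.symm)
  rw [map_div₀, eq_div_of_mul_eq hc hx, eq_div_of_mul_eq hc hy]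
  field_simp

theorem map_div_eq_div_add_one {P N c : F} (hP : σ P * c = P + N) (hN : σ N * c = N)
    (hN0 : N ≠ 0) : σ (P / N) = P / N + 1 := by
  have hc : c ≠ 0 := by rintro rfl; exact hN0 (by simpa using hN.symm)
  rw [map_div₀, eq_div_of_mul_eq hc hP, eq_div_of_mul_eq hc hN]
  field_simp

theorem div_div_sq_eq_of_mul_eq {x y P N : F} (h : y * x = P ^ 2 + P * N + N ^ 2)
    (hN : N ≠ 0) : y / x / (N / x) ^ 2 = (P / N) ^ 2 + P / N + 1 := by
  field_simp
  linear_combination h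

end Conjugation

section Esymm

variable {R : Type*} [CommRing R] (σ : R →+* R) {s1 s2 s3 : R}
  (h1 : σ s1 * s3 = s2) (h2 : σ s2 * s3 = s1) (h3 : σ s3 * s3 = 1)
include h1 h2

theorem map_s1_sq_add_s2 : σ (s1 ^ 2 + s2) * s3 ^ 2 = s2 ^ 2 + s1 * s3 := by
  simp only [map_add, map_pow]
  linear_combination (σ s1 * s3 + s2) * h1 + s3 * h2

include h3 in
theorem map_s1_mul_s2_add_s3 : σ (s1 * s2 + s3) * s3 ^ 2 = s1 * s2 + s3 := by
  simp only [map_add, map_mul]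
  linear_combination σ s2 * s3 * h1 + s2 * h2 + s3 * h3

include h3 in
theorem map_s2_sq_add_s1_mul_s3 : σ (s2 ^ 2 + s1 * s3) * s3 ^ 2 = s1 ^ 2 + s2 := by
  simp only [map_add, map_mul, map_pow]
  linear_combination (σ s2 * s3 + s1) * h2 + h1 + σ s1 * s3 * h3

end Esymm

section Inversion

variable {F : Type*} [Field F] (σ : F →+* F) {u1 u2 u3 : F}
  (hσ1 : σ u1 * u1 = 1) (hσ2 : σ u2 * u2 = 1) (hσ3 : σ u3 * u3 = 1)
include hσ1 hσ2 hσ3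

theorem map_esymm_of_map_mul_self_eq_one {s1 s2 s3 : F} (hs1 : s1 = u1 + u2 + u3)
    (hs2 : s2 = u1 * u2 + u2 * u3 + u3 * u1) (hs3 : s3 = u1 * u2 * u3) :
    σ s1 * s3 = s2 ∧ σ s2 * s3 = s1 ∧ σ s3 * s3 = 1 := by
  subst hs1 hs2 hs3
  have := right_ne_zero_of_mul_eq_one hσ1
  have := right_ne_zero_of_mul_eq_one hσ2
  have := right_ne_zero_of_mul_eq_one hσ3
  simp only [map_add, map_mul, eq_inv_of_mul_eq_one_left hσ1, eq_inv_of_mul_eq_one_left hσ2,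
    eq_inv_of_mul_eq_one_left hσ3]
  refine ⟨?_, ?_, ?_⟩ <;> field_simp <;> ring

theorem map_cyclic_mul_sq [CharP F 2] {s1 s2 s3 : F} (hs1 : s1 = u1 + u2 + u3)
    (hs2 : s2 = u1 * u2 + u2 * u3 + u3 * u1) (hs3 : s3 = u1 * u2 * u3) :
    σ (u1 * u2 ^ 2 + u2 * u3 ^ 2 + u3 * u1 ^ 2 + s3) * s3 ^ 2 =
      u1 * u2 ^ 2 + u2 * u3 ^ 2 + u3 * u1 ^ 2 + s3 + (s1 * s2 + s3) := by
  have := right_ne_zero_of_mul_eq_one hσ1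
  have := right_ne_zero_of_mul_eq_one hσ2
  have := right_ne_zero_of_mul_eq_one hσ3
  have hreversed : σ (u1 * u2 ^ 2 + u2 * u3 ^ 2 + u3 * u1 ^ 2 + s3) * s3 ^ 2 =
      u2 * u1 ^ 2 + u3 * u2 ^ 2 + u1 * u3 ^ 2 + s3 := by
    simp only [hs3, map_add, map_mul, map_pow, eq_inv_of_mul_eq_one_left hσ1,
      eq_inv_of_mul_eq_one_left hσ2, eq_inv_of_mul_eq_one_left hσ3]
    field_simp
    ring
  rw [hreversed, hs1, hs2, hs3]
  linear_combination
    (-(u1 * u2 ^ 2 + u2 * u3 ^ 2 + u3 * u1 ^ 2) - 2 * (u1 * u2 * u3)) * CharTwo.two_eq_zero (R := F)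

end Inversion

theorem esymm_mul_eq_cyclic {R : Type*} [CommRing R] [CharP R 2] {u1 u2 u3 s1 s2 s3 : R}
    (hs1 : s1 = u1 + u2 + u3) (hs2 : s2 = u1 * u2 + u2 * u3 + u3 * u1) (hs3 : s3 = u1 * u2 * u3) :
    (s2 ^ 2 + s1 * s3) * (s1 ^ 2 + s2) =
      (u1 * u2 ^ 2 + u2 * u3 ^ 2 + u3 * u1 ^ 2 + s3) ^ 2 +
        (u1 * u2 ^ 2 + u2 * u3 ^ 2 + u3 * u1 ^ 2 + s3) * (s1 * s2 + s3) + (s1 * s2 + s3) ^ 2 := by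
  subst hs1 hs2 hs3
  linear_combination -(u2 ^ 2 * u3 ^ 4 + u1 * u2 ^ 2 * u3 ^ 3 + u1 ^ 2 * u2 ^ 3 * u3 +
    u1 ^ 2 * u2 ^ 4 + u1 ^ 3 * u2 * u3 ^ 2 + u1 ^ 4 * u3 ^ 2) * CharTwo.two_eq_zero (R := R)

theorem stmt_9_general (m : ℕ) (F : Type*) [Field F] [Fintype F]
    (hF : Fintype.card F = 2 ^ (2 * m))
    (u1 u2 u3 : F)
    (h1 : u1 ^ (2 ^ m + 1) = 1) (h2 : u2 ^ (2 ^ m + 1) = 1)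
    (h3 : u3 ^ (2 ^ m + 1) = 1)
    (s1 s2 s3 a b : F)
    (hs1 : s1 = u1 + u2 + u3) (hs2 : s2 = u1 * u2 + u2 * u3 + u3 * u1)
    (hs3 : s3 = u1 * u2 * u3)
    (hnz : (s1 ^ 2 + s2) * (s1 * s2 + s3) * (s2 ^ 2 + s1 * s3) ≠ 0)
    (ha : a = (s1 * s2 + s3) / (s1 ^ 2 + s2))
    (hb : b = (s2 ^ 2 + s1 * s3) / (s1 ^ 2 + s2)) :
    b ^ (2 ^ m + 1) = 1 ∧
    (b / a ^ 2) ^ (2 ^ m) = b / a ^ 2 ∧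
    ∑ i ∈ Finset.range m, (b / a ^ 2) ^ (2 ^ i) = if Even m then 1 else 0 := by
  have : CharP F 2 := charP_of_card_eq_prime_pow hF
  set σ := iterateFrobenius F 2 m
  have hσ (x : F) : x ^ 2 ^ m = σ x := rfl
  rw [pow_succ, hσ] at h1 h2 h3
  obtain ⟨e1, e2, e3⟩ := map_esymm_of_map_mul_self_eq_one σ h1 h2 h3 hs1 hs2 hs3
  have hD : s1 ^ 2 + s2 ≠ 0 := left_ne_zero_of_mul (left_ne_zero_of_mul hnz)
  have hN1 : s1 * s2 + s3 ≠ 0 := right_ne_zero_of_mul (left_ne_zero_of_mul hnz)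
  have hN2 : s2 ^ 2 + s1 * s3 ≠ 0 := right_ne_zero_of_mul hnz
  set w := (u1 * u2 ^ 2 + u2 * u3 ^ 2 + u3 * u1 ^ 2 + s3) / (s1 * s2 + s3)
  have hw : w ^ 2 ^ m = w + 1 :=
    map_div_eq_div_add_one σ (map_cyclic_mul_sq σ h1 h2 h3 hs1 hs2 hs3)
      (map_s1_mul_s2_add_s3 σ e1 e2 e3) hN1
  have hc : b / a ^ 2 = w ^ 2 - w + 1 := by
    rw [ha, hb, CharTwo.sub_eq_add]
    exact div_div_sq_eq_of_mul_eq (esymm_mul_eq_cyclic hs1 hs2 hs3) hN1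
  refine ⟨?_, ?_, ?_⟩
  · rw [pow_succ, hσ, hb]
    exact map_div_mul_div_eq_one σ (map_s1_sq_add_s2 σ e1 e2)
      (map_s2_sq_add_s1_mul_s3 σ e1 e2 e3) hD hN2
  · rw [hc]
    exact pow_char_sub_self_add_one_pow_char_pow hw
  · rw [hc, sum_range_pow_char_sub_self_add_one_pow_char_pow hw, CharTwo.natCast_eq_ite]
    split_ifs <;> simp [CharTwo.add_self_eq_zero]

/-- For pairwise distinct `(q+1)`-st roots of unity `u1, u2, u3` in `GF(q^2)`, `q = 2^m`,
with `(s1^2+s2)(s1*s2+s3)(s2^2+s1*s3) ≠ 0`, set `a = (s1*s2+s3)/(s1^2+s2)` and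
`b = (s2^2+s1*s3)/(s1^2+s2)`. Then `b ∈ U_{q+1}`, `b/a^2 ∈ GF(q)` (i.e. it is fixed
by `x ↦ x^q`), and `Tr_{GF(q)/GF(2)}(b/a^2) ≡ 1 + m (mod 2)`. -/
theorem stmt_9 (m : ℕ) (hm : 0 < m) (F : Type*) [Field F] [Fintype F]
    (hF : Fintype.card F = 2 ^ (2 * m))
    (u1 u2 u3 : F)
    (h1 : u1 ^ (2 ^ m + 1) = 1) (h2 : u2 ^ (2 ^ m + 1) = 1)
    (h3 : u3 ^ (2 ^ m + 1) = 1)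
    (h12 : u1 ≠ u2) (h13 : u1 ≠ u3) (h23 : u2 ≠ u3)
    (s1 s2 s3 a b : F)
    (hs1 : s1 = u1 + u2 + u3) (hs2 : s2 = u1 * u2 + u2 * u3 + u3 * u1)
    (hs3 : s3 = u1 * u2 * u3)
    (hnz : (s1 ^ 2 + s2) * (s1 * s2 + s3) * (s2 ^ 2 + s1 * s3) ≠ 0)
    (ha : a = (s1 * s2 + s3) / (s1 ^ 2 + s2))
    (hb : b = (s2 ^ 2 + s1 * s3) / (s1 ^ 2 + s2)) :
    b ^ (2 ^ m + 1) = 1 ∧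
    (b / a ^ 2) ^ (2 ^ m) = b / a ^ 2 ∧
    ∑ i ∈ Finset.range m, (b / a ^ 2) ^ (2 ^ i) = if Even m then 1 else 0 :=
  stmt_9_general m F hF u1 u2 u3 h1 h2 h3 s1 s2 s3 a b hs1 hs2 hs3 hnz ha hb
end

section
/- Let q = 2^m with m even, m ≥ 4, and let U be the group of (q+1)-st roots of unity in GF(q^2). For any three pairwise distinct elements u1, u2, u3 of U, there exist exactly two distinct elements u4, u5 of U, both distinct from u1, u2, u3, such that the elementary symmetric polynomial σ_{5,2}(u1, u2, u3, u4, u5) = 0. Equivalently, the blocks {u1,...,u5} of 5-subsets of U with σ_{5,2} = 0 form a Steiner system S(3, 5, q+1) on U. -/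
/-!
Write `s, e, p` for the elementary symmetric functions of `u1, u2, u3`. For two further
points `x, y`, `σ₂ = e + s (x + y) + x y` and `σ₃ = p + e (x + y) + s x y`. The conjugation
`φ : z ↦ z ^ q` inverts every point of `U`, and `σ₂(u⁻¹) = σ₃(u) / σ₅(u)`, so on `U` the
equation `σ₂ = 0` forces `σ₃ = 0`. Together they form a linear system in `x + y` and `x y`
of determinant `s² - e`, which determines the pair `{x, y}` as soon as `s² ≠ e`.

In characteristic 2, `s² - e = P Q` for the Lagrange resolvents `P = u1 + ω u2 + ω² u3`
and `Q = u1 + ω² u2 + ω u3`, `ω` a primitive cube root of unity; as `m` is even, `φ ω = ω`,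
whence `φ(P) u1 u2 u3 = Q² + s P`. This identity shows that `P ≠ 0` (otherwise `Q = 0` and
`u2 + u3 = P + Q = 0`) and that `(P² + s Q) / Q = φ(Q) u1 u2 u3 / Q` and
`(Q² + s P) / P = φ(P) u1 u2 u3 / P` lie on `U`; a direct computation shows that they solve
the system. Finally, `x = y` in the system gives `(u1 + u2) (u1 + u3) (u2 + u3) = 0`, and
`x = u1` gives `(u1 + u2)² (u1 + u3)² = 0`.
-/

section Symmetric

variable {R : Type*} [CommRing R]

def sigma2 (u1 u2 u3 u4 u5 : R) : R :=
  u1 * u2 + u1 * u3 + u1 * u4 + u1 * u5 + u2 * u3 + u2 * u4 + u2 * u5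
    + u3 * u4 + u3 * u5 + u4 * u5

def sigma3 (u1 u2 u3 u4 u5 : R) : R :=
  u1 * u2 * u3 + u1 * u2 * u4 + u1 * u2 * u5 + u1 * u3 * u4 + u1 * u3 * u5 + u1 * u4 * u5
    + u2 * u3 * u4 + u2 * u3 * u5 + u2 * u4 * u5 + u3 * u4 * u5

lemma sigma2_swap (u1 u2 u3 x y : R) : sigma2 u1 u2 u3 x y = sigma2 u1 u2 u3 y x := by
  unfold sigma2; ring

lemma sigma3_swap (u1 u2 u3 x y : R) : sigma3 u1 u2 u3 x y = sigma3 u1 u2 u3 y x := by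
  unfold sigma3; ring

end Symmetric

lemma pair_eq_pair_of_add_eq_of_mul_eq {R : Type*} [CommRing R] [IsDomain R] {x y x' y' : R}
    (hadd : x + y = x' + y') (hmul : x * y = x' * y') : ({x, y} : Set R) = {x', y'} := by
  have : (x - x') * (x - y') = 0 := by linear_combination x * hadd - hmul
  rcases mul_eq_zero.mp this with h | h
  · have hx : x = x' := sub_eq_zero.mp h
    have hy : y = y' := by linear_combination hadd - hx
    rw [hx, hy]
  · have hx : x = y' := sub_eq_zero.mp h
    have hy : y = x' := by linear_combination hadd - hx
    rw [hx, hy, Set.pair_comm]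

lemma pair_eq_pair_of_sigma_eq_zero {F : Type*} [Field F] {u1 u2 u3 x y x' y' : F}
    (hD : (u1 + u2 + u3) ^ 2 ≠ u1 * u2 + u1 * u3 + u2 * u3)
    (h2 : sigma2 u1 u2 u3 x y = 0) (h3 : sigma3 u1 u2 u3 x y = 0)
    (h2' : sigma2 u1 u2 u3 x' y' = 0) (h3' : sigma3 u1 u2 u3 x' y' = 0) :
    ({x, y} : Set F) = {x', y'} := by
  unfold sigma2 sigma3 at *
  have hadd : x + y = x' + y' := by
    refine sub_eq_zero.mp ((mul_eq_zero.mp ?_).resolve_left (sub_ne_zero.mpr hD))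
    linear_combination (u1 + u2 + u3) * (h2 - h2') - (h3 - h3')
  exact pair_eq_pair_of_add_eq_of_mul_eq hadd
    (by linear_combination h2 - h2' - (u1 + u2 + u3) * hadd)

section CharTwo

variable {F : Type*} [Field F] [CharP F 2] {u1 u2 u3 x y : F}

lemma ne_of_sigma_eq_zero (h12 : u1 ≠ u2) (h13 : u1 ≠ u3) (h23 : u2 ≠ u3)
    (h2 : sigma2 u1 u2 u3 x y = 0) (h3 : sigma3 u1 u2 u3 x y = 0) : x ≠ y := by
  rintro rfl
  unfold sigma2 sigma3 at *
  have : (u1 + u2) * (u1 + u3) * (u2 + u3) = 0 := by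
    -- `ring_nf` leaves terms with even coefficients, which vanish in characteristic 2.
    linear_combination (norm := ring_nf) (u1 + u2 + u3) * h2 + h3
    simp [CharTwo.neg_eq, CharTwo.ofNat_eq_mod]
  simp [CharTwo.add_eq_zero, h12, h13, h23] at this

lemma notMem_of_sigma_eq_zero (h12 : u1 ≠ u2) (h13 : u1 ≠ u3) (h23 : u2 ≠ u3)
    (h2 : sigma2 u1 u2 u3 x y = 0) (h3 : sigma3 u1 u2 u3 x y = 0) :
    x ∉ ({u1, u2, u3} : Set F) ∧ y ∉ ({u1, u2, u3} : Set F) := by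
  have hne : ∀ a b c : F, a ≠ b → a ≠ c → (a + b) ^ 2 * (a + c) ^ 2 ≠ 0 :=
    fun a b c hab hac ↦ by simp [CharTwo.add_eq_zero, hab, hac]
  have key : ∀ x y : F, sigma2 u1 u2 u3 x y = 0 → sigma3 u1 u2 u3 x y = 0 →
      x ∉ ({u1, u2, u3} : Set F) := by
    intro x y h2 h3
    unfold sigma2 at h2
    unfold sigma3 at h3
    rintro (rfl | rfl | rfl)
    · refine hne _ _ _ h12 h13 ?_
      linear_combination (norm := ring_nf) (x ^ 2 + u2 * u3) * h2 + (u2 + u3) * h3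
      simp [CharTwo.neg_eq, CharTwo.ofNat_eq_mod]
    · refine hne _ _ _ h12.symm h23 ?_
      linear_combination (norm := ring_nf) (x ^ 2 + u1 * u3) * h2 + (u1 + u3) * h3
      simp [CharTwo.neg_eq, CharTwo.ofNat_eq_mod]
    · refine hne _ _ _ h13.symm h23.symm ?_
      linear_combination (norm := ring_nf) (x ^ 2 + u1 * u2) * h2 + (u1 + u2) * h3
      simp [CharTwo.neg_eq, CharTwo.ofNat_eq_mod]
  exact ⟨key x y h2 h3,
    key y x (sigma2_swap u1 u2 u3 x y ▸ h2) (sigma3_swap u1 u2 u3 x y ▸ h3)⟩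

end CharTwo

section Conjugation

variable {F : Type*} [Field F] (φ : F →+* F)

/-- For the Frobenius `z ↦ z ^ q` of a field with `q²` elements, this is the paper's `U`. -/
def unitCircle : Set F := {u | φ u * u = 1}

variable {φ}

lemma mem_unitCircle {u : F} : u ∈ unitCircle φ ↔ φ u * u = 1 := Iff.rfl

lemma map_eq_inv_of_mem_unitCircle {u : F} (hu : u ∈ unitCircle φ) : φ u = u⁻¹ :=
  eq_inv_of_mul_eq_one_left hu

lemma ne_zero_of_mem_unitCircle {u : F} (hu : u ∈ unitCircle φ) : u ≠ 0 :=
  right_ne_zero_of_mul_eq_one hu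

lemma mul_mem_unitCircle {u v : F} (hu : u ∈ unitCircle φ) (hv : v ∈ unitCircle φ) :
    u * v ∈ unitCircle φ := by
  rw [mem_unitCircle, map_mul] at *
  linear_combination φ u * u * hv + hu

lemma map_mul_div_mem_unitCircle (hφ : ∀ x, φ (φ x) = x) {x c : F} (hx : x ≠ 0)
    (hc : c ∈ unitCircle φ) : φ x * c / x ∈ unitCircle φ := by
  have hφx : φ x ≠ 0 := (map_ne_zero φ).mpr hx
  simp only [mem_unitCircle, map_div₀, map_mul, hφ] at hc ⊢
  field_simp
  exact hc

lemma sigma3_eq_zero_of_sigma2_eq_zero {u1 u2 u3 u4 u5 : F} (h1 : u1 ∈ unitCircle φ)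
    (h2 : u2 ∈ unitCircle φ) (h3 : u3 ∈ unitCircle φ) (h4 : u4 ∈ unitCircle φ)
    (h5 : u5 ∈ unitCircle φ) (h : sigma2 u1 u2 u3 u4 u5 = 0) : sigma3 u1 u2 u3 u4 u5 = 0 := by
  have hconj := congrArg φ h
  simp only [sigma2, map_add, map_mul, map_zero, map_eq_inv_of_mem_unitCircle h1,
    map_eq_inv_of_mem_unitCircle h2, map_eq_inv_of_mem_unitCircle h3,
    map_eq_inv_of_mem_unitCircle h4, map_eq_inv_of_mem_unitCircle h5] at hconj
  field_simp [ne_zero_of_mem_unitCircle h1, ne_zero_of_mem_unitCircle h2,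
    ne_zero_of_mem_unitCircle h3, ne_zero_of_mem_unitCircle h4,
    ne_zero_of_mem_unitCircle h5] at hconj
  unfold sigma3
  linear_combination hconj

end Conjugation

def lagrangeResolvent {R : Type*} [CommRing R] (w u1 u2 u3 : R) : R := u1 + w * u2 + w ^ 2 * u3

section Resolvent

variable {F : Type*} [Field F] [CharP F 2] {w u1 u2 u3 : F} (hw : w ^ 2 + w + 1 = 0)
include hw

lemma lagrangeResolvent_add_swap :
    lagrangeResolvent w u1 u2 u3 + lagrangeResolvent w u1 u3 u2 = u2 + u3 := by
  unfold lagrangeResolvent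
  linear_combination (norm := ring_nf) (u2 + u3) * hw
  simp [CharTwo.ofNat_eq_mod]

lemma lagrangeResolvent_mul_swap :
    lagrangeResolvent w u1 u2 u3 * lagrangeResolvent w u1 u3 u2
      = (u1 + u2 + u3) ^ 2 - (u1 * u2 + u1 * u3 + u2 * u3) := by
  unfold lagrangeResolvent
  linear_combination (norm := ring_nf)
    ((w + 1) * (u2 ^ 2 + u3 ^ 2) + u1 * u2 + u1 * u3 + (w ^ 2 + w + 1) * u2 * u3) * hw
  simp [CharTwo.neg_eq, CharTwo.ofNat_eq_mod]

variable {φ : F →+* F} (hφw : φ w = w) (h1 : u1 ∈ unitCircle φ) (h2 : u2 ∈ unitCircle φ)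
  (h3 : u3 ∈ unitCircle φ)
include hφw h1 h2 h3

lemma map_lagrangeResolvent_mul :
    φ (lagrangeResolvent w u1 u2 u3) * (u1 * u2 * u3)
      = lagrangeResolvent w u1 u3 u2 ^ 2 + (u1 + u2 + u3) * lagrangeResolvent w u1 u2 u3 := by
  calc φ (lagrangeResolvent w u1 u2 u3) * (u1 * u2 * u3)
        = u2 * u3 + w * u1 * u3 + w ^ 2 * u1 * u2 := by
        simp only [lagrangeResolvent, map_add, map_mul, map_pow, hφw]
        rw [mem_unitCircle] at h1 h2 h3
        linear_combination (u2 * u3) * h1 + (w * u1 * u3) * h2 + (w ^ 2 * u1 * u2) * h3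
    _ = _ := by
        unfold lagrangeResolvent
        linear_combination (norm := ring_nf)
          (w * (w + 1) * u2 ^ 2 + u1 * u2 + u1 * u3 + u2 * u3) * hw
        simp [CharTwo.neg_eq, CharTwo.ofNat_eq_mod]

lemma lagrangeResolvent_ne_zero (h23 : u2 ≠ u3) : lagrangeResolvent w u1 u2 u3 ≠ 0 := by
  intro hP
  have hQ : lagrangeResolvent w u1 u3 u2 = 0 := by
    have := map_lagrangeResolvent_mul hw hφw h1 h2 h3
    rw [hP, map_zero, zero_mul, mul_zero, add_zero, eq_comm] at this
    exact pow_eq_zero_iff two_ne_zero |>.mp this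
  have := lagrangeResolvent_add_swap (u1 := u1) (u2 := u2) (u3 := u3) hw
  rw [hP, hQ, add_zero, eq_comm, CharTwo.add_eq_zero] at this
  exact h23 this

lemma exists_sigma2_eq_zero (hφ : ∀ x, φ (φ x) = x) (h23 : u2 ≠ u3) :
    ∃ x ∈ unitCircle φ, ∃ y ∈ unitCircle φ, sigma2 u1 u2 u3 x y = 0 := by
  set P := lagrangeResolvent w u1 u2 u3
  set Q := lagrangeResolvent w u1 u3 u2
  have hP : P ≠ 0 := lagrangeResolvent_ne_zero hw hφw h1 h2 h3 h23
  have hQ : Q ≠ 0 := lagrangeResolvent_ne_zero hw hφw h1 h3 h2 h23.symm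
  have hp := mul_mem_unitCircle (mul_mem_unitCircle h1 h2) h3
  refine ⟨φ Q * (u1 * u2 * u3) / Q, map_mul_div_mem_unitCircle hφ hQ hp,
    φ P * (u1 * u2 * u3) / P, map_mul_div_mem_unitCircle hφ hP hp, ?_⟩
  have hx : φ Q * (u1 * u2 * u3) / Q * Q = P ^ 2 + (u1 + u2 + u3) * Q := by
    rw [div_mul_cancel₀ _ hQ]
    linear_combination map_lagrangeResolvent_mul hw hφw h1 h3 h2
  have hy : φ P * (u1 * u2 * u3) / P * P = Q ^ 2 + (u1 + u2 + u3) * P := by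
    rw [div_mul_cancel₀ _ hP]
    exact map_lagrangeResolvent_mul hw hφw h1 h2 h3
  have hD : P * Q = (u1 + u2 + u3) ^ 2 - (u1 * u2 + u1 * u3 + u2 * u3) :=
    lagrangeResolvent_mul_swap hw
  generalize φ Q * (u1 * u2 * u3) / Q = x at hx
  generalize φ P * (u1 * u2 * u3) / P = y at hy
  refine (mul_eq_zero.mp ?_).resolve_left (mul_ne_zero hP hQ)
  unfold sigma2
  linear_combination (norm := ring_nf)
    ((u1 + u2 + u3) * P + y * P) * hx + P ^ 2 * hy + P * Q * hD
  simp [CharTwo.ofNat_eq_mod]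

end Resolvent

section FiniteField

variable {F : Type*} [Field F]

lemma exists_sq_add_self_add_one_eq_zero [Fintype F] (h : 3 ∣ Fintype.card F - 1) :
    ∃ w : F, w ^ 2 + w + 1 = 0 := by
  classical
  rw [← Fintype.card_units] at h
  obtain ⟨g, hg⟩ := exists_prime_orderOf_dvd_card 3 h
  have hg3 : (g : F) ^ 3 = 1 := by
    rw [← Units.val_pow_eq_pow_val, ← hg, pow_orderOf_eq_one, Units.val_one]
  have hg1 : (g : F) ≠ 1 := fun h ↦ by simp [Units.val_eq_one.mp h] at hg
  have : ((g : F) - 1) * ((g : F) ^ 2 + g + 1) = 0 := by linear_combination hg3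
  exact ⟨g, (mul_eq_zero.mp this).resolve_left (sub_ne_zero.mpr hg1)⟩

variable {p n : ℕ} [ExpChar F p]

lemma mem_unitCircle_iterateFrobenius {u : F} :
    u ∈ unitCircle (iterateFrobenius F p n) ↔ u ^ (p ^ n + 1) = 1 := by
  rw [mem_unitCircle, iterateFrobenius_def, pow_succ]

lemma iterateFrobenius_iterateFrobenius_apply [Fintype F] (hF : Fintype.card F = p ^ (2 * n))
    (x : F) : iterateFrobenius F p n (iterateFrobenius F p n x) = x := by
  rw [iterateFrobenius_def, iterateFrobenius_def, ← pow_mul, ← pow_add, ← two_mul, ← hF,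
    FiniteField.pow_card]

end FiniteField

lemma pow_two_pow_eq_self_of_sq_add_self_add_one_eq_zero {R : Type*} [CommRing R] {w : R}
    (hw : w ^ 2 + w + 1 = 0) {m : ℕ} (hm : Even m) : w ^ 2 ^ m = w := by
  have hw3 : w ^ 3 = 1 := by linear_combination (w - 1) * hw
  obtain ⟨k, rfl⟩ := hm
  have : 2 ^ (k + k) % 3 = 1 := by rw [← two_mul, pow_mul, Nat.pow_mod]; norm_num
  rw [pow_eq_pow_mod _ hw3, this, pow_one]

theorem stmt_12_general (m : ℕ) (hme : Even m) (F : Type*) [Field F] [Fintype F]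
    (hF : Fintype.card F = 2 ^ (2 * m))
    (u1 u2 u3 : F)
    (h1 : u1 ^ (2 ^ m + 1) = 1) (h2 : u2 ^ (2 ^ m + 1) = 1)
    (h3 : u3 ^ (2 ^ m + 1) = 1)
    (h12 : u1 ≠ u2) (h13 : u1 ≠ u3) (h23 : u2 ≠ u3) :
    ∃ u4 u5 : F,
      u4 ^ (2 ^ m + 1) = 1 ∧ u5 ^ (2 ^ m + 1) = 1 ∧ u4 ≠ u5 ∧
      u4 ∉ ({u1, u2, u3} : Set F) ∧ u5 ∉ ({u1, u2, u3} : Set F) ∧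
      u1 * u2 + u1 * u3 + u1 * u4 + u1 * u5 + u2 * u3 + u2 * u4 + u2 * u5
        + u3 * u4 + u3 * u5 + u4 * u5 = 0 ∧
      ∀ v4 v5 : F,
        v4 ^ (2 ^ m + 1) = 1 → v5 ^ (2 ^ m + 1) = 1 → v4 ≠ v5 →
        v4 ∉ ({u1, u2, u3} : Set F) → v5 ∉ ({u1, u2, u3} : Set F) →
        u1 * u2 + u1 * u3 + u1 * v4 + u1 * v5 + u2 * u3 + u2 * v4 + u2 * v5
          + u3 * v4 + u3 * v5 + v4 * v5 = 0 →
        ({v4, v5} : Set F) = {u4, u5} := by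
  have : CharP F 2 := charP_of_card_eq_prime_pow hF
  simp only [← mem_unitCircle_iterateFrobenius (p := 2)] at h1 h2 h3 ⊢
  set φ := iterateFrobenius F 2 m
  have hφ : ∀ x, φ (φ x) = x := iterateFrobenius_iterateFrobenius_apply hF
  obtain ⟨w, hw⟩ := exists_sq_add_self_add_one_eq_zero (F := F)
    (by rw [hF, pow_mul]; simpa using Nat.sub_dvd_pow_sub_pow 4 1 m)
  have hφw : φ w = w := pow_two_pow_eq_self_of_sq_add_self_add_one_eq_zero hw hme
  obtain ⟨u4, hu4, u5, hu5, hσ2⟩ := exists_sigma2_eq_zero hw hφw h1 h2 h3 hφ h23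
  have hσ3 := sigma3_eq_zero_of_sigma2_eq_zero h1 h2 h3 hu4 hu5 hσ2
  have hD : (u1 + u2 + u3) ^ 2 ≠ u1 * u2 + u1 * u3 + u2 * u3 := by
    rw [← sub_ne_zero, ← lagrangeResolvent_mul_swap hw]
    exact mul_ne_zero (lagrangeResolvent_ne_zero hw hφw h1 h2 h3 h23)
      (lagrangeResolvent_ne_zero hw hφw h1 h3 h2 h23.symm)
  obtain ⟨hu4_notMem, hu5_notMem⟩ := notMem_of_sigma_eq_zero h12 h13 h23 hσ2 hσ3
  refine ⟨u4, u5, hu4, hu5, ne_of_sigma_eq_zero h12 h13 h23 hσ2 hσ3, hu4_notMem, hu5_notMem,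
    hσ2, fun v4 v5 hv4 hv5 _ _ _ hσv ↦ ?_⟩
  exact pair_eq_pair_of_sigma_eq_zero hD hσv
    (sigma3_eq_zero_of_sigma2_eq_zero h1 h2 h3 hv4 hv5 hσv) hσ2 hσ3

/-- For `q = 2^m`, `m` even, `m ≥ 4`: for any three pairwise distinct `(q+1)`-st roots
of unity `u1, u2, u3` in `GF(q^2)` there exist exactly two distinct `u4, u5 ∈ U_{q+1}`,
both distinct from `u1, u2, u3`, with `σ_{5,2}(u1,…,u5) = 0`; i.e. the 5-subsets of
`U_{q+1}` with vanishing `σ_{5,2}` form a Steiner system `S(3,5,q+1)`. -/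
theorem stmt_12 (m : ℕ) (hm : 4 ≤ m) (hme : Even m) (F : Type*) [Field F] [Fintype F]
    (hF : Fintype.card F = 2 ^ (2 * m))
    (u1 u2 u3 : F)
    (h1 : u1 ^ (2 ^ m + 1) = 1) (h2 : u2 ^ (2 ^ m + 1) = 1)
    (h3 : u3 ^ (2 ^ m + 1) = 1)
    (h12 : u1 ≠ u2) (h13 : u1 ≠ u3) (h23 : u2 ≠ u3) :
    ∃ u4 u5 : F,
      u4 ^ (2 ^ m + 1) = 1 ∧ u5 ^ (2 ^ m + 1) = 1 ∧ u4 ≠ u5 ∧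
      u4 ∉ ({u1, u2, u3} : Set F) ∧ u5 ∉ ({u1, u2, u3} : Set F) ∧
      u1 * u2 + u1 * u3 + u1 * u4 + u1 * u5 + u2 * u3 + u2 * u4 + u2 * u5
        + u3 * u4 + u3 * u5 + u4 * u5 = 0 ∧
      ∀ v4 v5 : F,
        v4 ^ (2 ^ m + 1) = 1 → v5 ^ (2 ^ m + 1) = 1 → v4 ≠ v5 →
        v4 ∉ ({u1, u2, u3} : Set F) → v5 ∉ ({u1, u2, u3} : Set F) →
        u1 * u2 + u1 * u3 + u1 * v4 + u1 * v5 + u2 * u3 + u2 * v4 + u2 * v5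
          + u3 * v4 + u3 * v5 + v4 * v5 = 0 →
        ({v4, v5} : Set F) = {u4, u5} :=
  stmt_12_general m hme F hF u1 u2 u3 h1 h2 h3 h12 h13 h23
end

section
/- Let q = 2^m with m even and let U be the group of (q+1)-st roots of unity in GF(q^2). Suppose {u1,...,u6} is a 6-subset of U with σ_{6,3}(u1,...,u6) = 0 and suppose two 5-subsets A and A' of {u1,...,u6} both satisfy σ_{5,2} = 0. Then A = A'. -/
/-!
If `s = {x} ∪ A = {y} ∪ A'` with `σ₂(A) = σ₂(A') = 0`, then `x` and `y` are both roots of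
`X² - σ₁(s) X + σ₂(s)`, so for `x ≠ y` we get `σ₁(A) = y`. Then `y ∈ A`, and together with
`σ₃(A) = σ₃(s) = 0` the four elements of `T = A \ {y}` satisfy `σ₁(T) = σ₂(T) = σ₃(T) = 0`.
Hence they are roots of `X⁴ + σ₄(T)`, which has a single root in characteristic `2`, as
`t ↦ t⁴` is injective there.
-/

open Polynomial

namespace Multiset

variable {R : Type*} [CommRing R]

theorem esymm_cons (a : R) (t : Multiset R) (n : ℕ) :
    (a ::ₘ t).esymm (n + 1) = t.esymm (n + 1) + a * t.esymm n := by
  simp only [esymm, powersetCard_cons, map_add, sum_add, map_map, Function.comp_def, prod_cons,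
    ← sum_map_mul_left]

theorem esymm_one_cons (a : R) (t : Multiset R) : (a ::ₘ t).esymm 1 = t.esymm 1 + a := by
  simp [esymm]

theorem pow_card_add_esymm_card_eq_zero {T : Multiset R}
    (hT : ∀ j, 0 < j → j < card T → T.esymm j = 0) {t : R} (ht : t ∈ T) :
    t ^ card T + (-1) ^ card T * T.esymm (card T) = 0 := by
  have hroot : ((T.map fun a => X - C a).prod).eval t = 0 := by
    rw [eval_multiset_prod]
    exact prod_eq_zero (mem_map.mpr ⟨_, mem_map.mpr ⟨t, ht, rfl⟩, by simp⟩)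
  obtain ⟨n, hn⟩ : ∃ n, card T = n + 1 :=
    Nat.exists_eq_succ_of_ne_zero (card_pos_iff_exists_mem.mpr ⟨t, ht⟩).ne'
  rw [prod_X_sub_X_eq_sum_esymm, eval_finsetSum, hn, Finset.sum_range_succ,
    Finset.sum_range_succ', Finset.sum_eq_zero] at hroot
  · rw [hn]
    simpa [esymm, powersetCard_zero_left] using hroot
  · intro j hj
    rw [hT (j + 1) (by omega) (by simp at hj; omega)]
    simp

theorem eq_of_mem_of_esymm_eq_zero [IsReduced R] (p k : ℕ) [ExpChar R p] {T : Multiset R}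
    (hcard : card T = p ^ k) (hT : ∀ j, 0 < j → j < card T → T.esymm j = 0) {a b : R}
    (ha : a ∈ T) (hb : b ∈ T) : a = b := by
  apply iterateFrobenius_inj R p k
  have hpow := fun t (ht : t ∈ T) => pow_card_add_esymm_card_eq_zero hT ht
  rw [iterateFrobenius_def, iterateFrobenius_def, ← hcard]
  linear_combination hpow a ha - hpow b hb

theorem esymm_one_eq_of_cons_eq_cons [NoZeroDivisors R] {x y : R} {A B : Multiset R}
    (h : x ::ₘ A = y ::ₘ B) (hA : A.esymm 2 = 0) (hB : B.esymm 2 = 0) (hxy : x ≠ y) :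
    A.esymm 1 = y := by
  have hroot : ∀ a C, a ::ₘ C = x ::ₘ A → C.esymm 2 = 0 →
      a ^ 2 - (x ::ₘ A).esymm 1 * a + (x ::ₘ A).esymm 2 = 0 := by
    intro a C hC hC2
    rw [← hC, esymm_one_cons, esymm_cons a C 1, hC2]
    ring
  have hsum : (x - y) * (x + y - (x ::ₘ A).esymm 1) = 0 := by
    linear_combination hroot x A rfl hA - hroot y B h.symm hB
  have hsum' := (mul_eq_zero.mp hsum).resolve_left (sub_ne_zero.mpr hxy)
  rw [esymm_one_cons] at hsum'
  linear_combination -hsum'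

theorem esymm_eq_zero_of_esymm_cons {y : R} {T : Multiset R} {n : ℕ}
    (h1 : (y ::ₘ T).esymm 1 = y) (h : ∀ j, 2 ≤ j → j ≤ n → (y ::ₘ T).esymm j = 0) :
    ∀ j, 1 ≤ j → j ≤ n → T.esymm j = 0 := by
  intro j hj hjn
  induction j with
  | zero => omega
  | succ j ih =>
    rcases Nat.eq_zero_or_pos j with rfl | hj
    · rw [esymm_one_cons] at h1
      linear_combination h1
    · have := h (j + 1) (by omega) hjn
      rwa [esymm_cons, ih hj (by omega), mul_zero, add_zero] at this

theorem eq_of_cons_eq_cons_of_esymm_eq_zero [NoZeroDivisors R] [CharP R 2] {x y : R}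
    {A B : Multiset R} (h : x ::ₘ A = y ::ₘ B) (hnodup : (x ::ₘ A).Nodup) (hcard : card A = 5)
    (h3 : (x ::ₘ A).esymm 3 = 0) (hA : A.esymm 2 = 0) (hB : B.esymm 2 = 0) : x = y := by
  classical
  by_contra hxy
  have hyA : y ∈ A := (mem_cons.mp (h ▸ mem_cons_self y B)).resolve_left (Ne.symm hxy)
  obtain ⟨T, hT⟩ : ∃ T, A = y ::ₘ T := ⟨_, (cons_erase hyA).symm⟩
  subst hT
  have hTcard : card T = 2 ^ 2 := by
    rw [card_cons] at hcard
    omega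
  have hT0 : ∀ j, 0 < j → j < card T → T.esymm j = 0 := by
    refine fun j hj hjT => esymm_eq_zero_of_esymm_cons (y := y) (n := 3) ?_ ?_ j hj (by omega)
    · exact esymm_one_eq_of_cons_eq_cons h hA hB hxy
    · intro j hj hj3
      interval_cases j
      · exact hA
      · rw [esymm_cons x _ 2, hA] at h3
        simpa using h3
  have hTnodup : T.Nodup := (nodup_cons.mp (nodup_cons.mp hnodup).2).2
  obtain ⟨a, b, ha, hb, hab⟩ := Finset.one_lt_card_iff.mp
    (show 1 < (⟨T, hTnodup⟩ : Finset R).card by simp [Finset.card, hTcard])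
  exact hab (eq_of_mem_of_esymm_eq_zero 2 2 hTcard hT0 ha hb)

end Multiset

theorem Finset.exists_val_eq_cons_of_subset {α : Type*} [DecidableEq α] {A s : Finset α}
    (hA : A ⊆ s) (hcard : A.card + 1 = s.card) : ∃ x ∉ A, s.val = x ::ₘ A.val := by
  obtain ⟨x, hx, rfl⟩ := Finset.exists_eq_insert_iff.mpr ⟨hA, hcard⟩
  exact ⟨x, hx, Finset.insert_val_of_notMem hx⟩

theorem stmt_13_general (m : ℕ) (hm : 0 < m) (F : Type*) [Field F] [Fintype F]
    (hF : Fintype.card F = 2 ^ (2 * m))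
    (s : Finset F) (hscard : s.card = 6)
    (hs63 : Multiset.esymm s.val 3 = 0)
    (A A' : Finset F)
    (hA : A ⊆ s) (hAcard : A.card = 5) (hA52 : Multiset.esymm A.val 2 = 0)
    (hA' : A' ⊆ s) (hA'card : A'.card = 5) (hA'52 : Multiset.esymm A'.val 2 = 0) :
    A = A' := by
  classical
  have : CharP F 2 := ringChar.of_eq <| FiniteField.even_card_iff_char_two.mpr <| by
    rw [hF]
    exact Nat.mod_eq_zero_of_dvd (dvd_pow_self 2 (by omega))
  obtain ⟨x, -, hx⟩ := Finset.exists_val_eq_cons_of_subset hA (by omega)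
  obtain ⟨y, -, hy⟩ := Finset.exists_val_eq_cons_of_subset hA' (by omega)
  have hxy : x = y := Multiset.eq_of_cons_eq_cons_of_esymm_eq_zero (hx.symm.trans hy)
    (hx ▸ s.nodup) hAcard (hx ▸ hs63) hA52 hA'52
  subst hxy
  exact Finset.val_inj.mp ((Multiset.cons_inj_right x).mp (hx.symm.trans hy))

/-- For `q = 2^m`, `m` even: if a 6-subset `s` of `U_{q+1} ⊆ GF(q^2)` satisfies
`σ_{6,3} = 0` and two 5-subsets `A, A'` of `s` both satisfy `σ_{5,2} = 0`,
then `A = A'`. -/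
theorem stmt_13 (m : ℕ) (hm : 0 < m) (hme : Even m) (F : Type*) [Field F] [Fintype F]
    (hF : Fintype.card F = 2 ^ (2 * m))
    (s : Finset F) (hscard : s.card = 6)
    (hsU : ∀ u ∈ s, u ^ (2 ^ m + 1) = 1)
    (hs63 : Multiset.esymm s.val 3 = 0)
    (A A' : Finset F)
    (hA : A ⊆ s) (hAcard : A.card = 5) (hA52 : Multiset.esymm A.val 2 = 0)
    (hA' : A' ⊆ s) (hA'card : A'.card = 5) (hA'52 : Multiset.esymm A'.val 2 = 0) :
    A = A' :=
  stmt_13_general m hm F hF s hscard hs63 A A' hA hAcard hA52 hA' hA'card hA'52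
end

section
/- Let q = 2^m and let U be the group of (q+1)-st roots of unity in GF(q^2). For any four pairwise distinct elements u1, u2, u3, u4 of U, the elementary symmetric polynomials σ_{4,1} = Σ u_i and σ_{4,3} = Σ_{i<j<k} u_i u_j u_k are both nonzero, and for each i ∈ {1,2,3,4}, both σ_{4,3} + u_i·σ_{4,2} and σ_{4,2} + u_i·σ_{4,1} are nonzero. -/
/-!
In characteristic 2 the Frobenius `φ x = x ^ 2 ^ m` is a ring endomorphism inverting every `u`
with `u ^ (2 ^ m + 1) = 1`. Hence `φ σ₁ = σ₃ / σ₄`, and for `u = a` with `b, c, d` the other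
three roots, `σ₂ + a σ₁ = bc + bd + cd + a²` and `σ₃ + a σ₂ = bcd + a² (b + c + d)` are exchanged
by `φ` up to the factor `a² b c d`. So in each pair one expression vanishes iff the other does,
and both cannot vanish for distinct roots: the pair then combines to `(a + b) (b + c) (c + a) = 0`,
resp. `(a + b)² (c + d) = 0`.
-/

theorem RingHom.eq_zero_iff_of_map_eq_div {K L : Type*} [DivisionRing K] [DivisionRing L]
    (φ : K →+* L) {x : K} {y z : L} (h : φ x = y / z) (hz : z ≠ 0) :
    x = 0 ↔ y = 0 := by
  rw [← map_eq_zero_iff φ φ.injective, h, div_eq_zero_iff, or_iff_left hz]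

namespace CharTwo

variable {F : Type*} [Field F] [CharP F 2]

theorem add_ne_zero_of_ne {a b : F} (h : a ≠ b) : a + b ≠ 0 := by
  rw [← sub_eq_add]
  exact sub_ne_zero.mpr h

variable (φ : F →+* F) {a b c d : F}

theorem sum_ne_zero_and_esymm_three_ne_zero
    (ha : φ a * a = 1) (hb : φ b * b = 1) (hc : φ c * c = 1) (hd : φ d * d = 1)
    (hab : a ≠ b) (hbc : b ≠ c) (hca : c ≠ a) :
    a + b + c + d ≠ 0 ∧ a * b * c + a * b * d + a * c * d + b * c * d ≠ 0 := by
  have ha₀ := right_ne_zero_of_mul_eq_one ha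
  have hb₀ := right_ne_zero_of_mul_eq_one hb
  have hc₀ := right_ne_zero_of_mul_eq_one hc
  have hd₀ := right_ne_zero_of_mul_eq_one hd
  have hφ : φ (a + b + c + d) =
      (a * b * c + a * b * d + a * c * d + b * c * d) / (a * b * c * d) := by
    simp only [map_add, eq_inv_of_mul_eq_one_left ha, eq_inv_of_mul_eq_one_left hb,
      eq_inv_of_mul_eq_one_left hc, eq_inv_of_mul_eq_one_left hd]
    field_simp
    ring
  have hiff := φ.eq_zero_iff_of_map_eq_div hφ (by positivity)
  have hnot_both : ¬ (a + b + c + d = 0 ∧ a * b * c + a * b * d + a * c * d + b * c * d = 0) := by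
    rintro ⟨h₁, h₃⟩
    have hfactor : (a + b) * (b + c) * (c + a) = (a + b + c + d) * (a * b + b * c + c * a) -
        (a * b * c + a * b * d + a * c * d + b * c * d) := by
      ring
    rw [h₁, h₃] at hfactor
    simp [add_ne_zero_of_ne hab, add_ne_zero_of_ne hbc, add_ne_zero_of_ne hca] at hfactor
  tauto

theorem esymm_add_mul_ne_zero
    (ha : φ a * a = 1) (hb : φ b * b = 1) (hc : φ c * c = 1) (hd : φ d * d = 1)
    (hab : a ≠ b) (hcd : c ≠ d) {s₁ s₂ s₃ : F} (hs₁ : s₁ = a + b + c + d)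
    (hs₂ : s₂ = a * b + a * c + a * d + b * c + b * d + c * d)
    (hs₃ : s₃ = a * b * c + a * b * d + a * c * d + b * c * d) :
    s₃ + a * s₂ ≠ 0 ∧ s₂ + a * s₁ ≠ 0 := by
  have ha₀ := right_ne_zero_of_mul_eq_one ha
  have hb₀ := right_ne_zero_of_mul_eq_one hb
  have hc₀ := right_ne_zero_of_mul_eq_one hc
  have hd₀ := right_ne_zero_of_mul_eq_one hd
  have h₂ : (2 : F) = 0 := two_eq_zero
  have hP : s₂ + a * s₁ = b * c + b * d + c * d + a ^ 2 := by
    linear_combination hs₂ + a * hs₁ + a * (b + c + d) * h₂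
  have hQ : s₃ + a * s₂ = b * c * d + a ^ 2 * (b + c + d) := by
    linear_combination hs₃ + a * hs₂ + a * (b * c + b * d + c * d) * h₂
  rw [hP, hQ]
  have hφ : φ (b * c + b * d + c * d + a ^ 2) =
      (b * c * d + a ^ 2 * (b + c + d)) / (a ^ 2 * b * c * d) := by
    simp only [map_add, map_mul, map_pow, eq_inv_of_mul_eq_one_left ha,
      eq_inv_of_mul_eq_one_left hb, eq_inv_of_mul_eq_one_left hc, eq_inv_of_mul_eq_one_left hd]
    field_simp
    ring
  have hiff := φ.eq_zero_iff_of_map_eq_div hφ (by positivity)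
  have hnot_both : ¬ (b * c + b * d + c * d + a ^ 2 = 0 ∧ b * c * d + a ^ 2 * (b + c + d) = 0) := by
    rintro ⟨hP₀, hQ₀⟩
    have hfactor : (a + b) ^ 2 * (c + d) = 0 := by
      linear_combination b * hP₀ + hQ₀ + (a * b * (c + d) - b * c * d - a ^ 2 * b) * h₂
    simp [add_ne_zero_of_ne hab, add_ne_zero_of_ne hcd] at hfactor
  tauto

end CharTwo

theorem stmt_14_general (m : ℕ) (F : Type*) [Field F] [Fintype F]
    (hF : Fintype.card F = 2 ^ (2 * m))
    (u1 u2 u3 u4 : F)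
    (h1 : u1 ^ (2 ^ m + 1) = 1) (h2 : u2 ^ (2 ^ m + 1) = 1)
    (h3 : u3 ^ (2 ^ m + 1) = 1) (h4 : u4 ^ (2 ^ m + 1) = 1)
    (h12 : u1 ≠ u2) (h13 : u1 ≠ u3) (h14 : u1 ≠ u4)
    (h23 : u2 ≠ u3) (h24 : u2 ≠ u4) (h34 : u3 ≠ u4)
    (s1 s2 s3 : F)
    (hs1 : s1 = u1 + u2 + u3 + u4)
    (hs2 : s2 = u1 * u2 + u1 * u3 + u1 * u4 + u2 * u3 + u2 * u4 + u3 * u4)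
    (hs3 : s3 = u1 * u2 * u3 + u1 * u2 * u4 + u1 * u3 * u4 + u2 * u3 * u4) :
    s1 ≠ 0 ∧ s3 ≠ 0 ∧
    ∀ u ∈ ({u1, u2, u3, u4} : Set F), s3 + u * s2 ≠ 0 ∧ s2 + u * s1 ≠ 0 := by
  have : CharP F 2 := charP_of_card_eq_prime_pow hF
  let φ := iterateFrobenius F 2 m
  have hφ {u : F} (hu : u ^ (2 ^ m + 1) = 1) : φ u * u = 1 := by
    rwa [iterateFrobenius_def, ← pow_succ]
  obtain ⟨hσ₁, hσ₃⟩ := CharTwo.sum_ne_zero_and_esymm_three_ne_zero φ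
    (hφ h1) (hφ h2) (hφ h3) (hφ h4) h12 h23 h13.symm
  refine ⟨hs1 ▸ hσ₁, hs3 ▸ hσ₃, ?_⟩
  rintro u (rfl | rfl | rfl | rfl)
  · exact CharTwo.esymm_add_mul_ne_zero φ (hφ h1) (hφ h2) (hφ h3) (hφ h4) h12 h34 hs1 hs2 hs3
  · exact CharTwo.esymm_add_mul_ne_zero φ (hφ h2) (hφ h1) (hφ h3) (hφ h4) h12.symm h34
      (hs1.trans (by ring)) (hs2.trans (by ring)) (hs3.trans (by ring))
  · exact CharTwo.esymm_add_mul_ne_zero φ (hφ h3) (hφ h1) (hφ h2) (hφ h4) h13.symm h24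
      (hs1.trans (by ring)) (hs2.trans (by ring)) (hs3.trans (by ring))
  · exact CharTwo.esymm_add_mul_ne_zero φ (hφ h4) (hφ h1) (hφ h2) (hφ h3) h14.symm h23
      (hs1.trans (by ring)) (hs2.trans (by ring)) (hs3.trans (by ring))

/-- For four pairwise distinct `(q+1)`-st roots of unity `u1, u2, u3, u4` in `GF(q^2)`,
`q = 2^m`: `σ_{4,1} ≠ 0`, `σ_{4,3} ≠ 0`, and for each `u ∈ {u1,u2,u3,u4}` both
`σ_{4,3} + u·σ_{4,2}` and `σ_{4,2} + u·σ_{4,1}` are nonzero. -/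
theorem stmt_14 (m : ℕ) (hm : 0 < m) (F : Type*) [Field F] [Fintype F]
    (hF : Fintype.card F = 2 ^ (2 * m))
    (u1 u2 u3 u4 : F)
    (h1 : u1 ^ (2 ^ m + 1) = 1) (h2 : u2 ^ (2 ^ m + 1) = 1)
    (h3 : u3 ^ (2 ^ m + 1) = 1) (h4 : u4 ^ (2 ^ m + 1) = 1)
    (h12 : u1 ≠ u2) (h13 : u1 ≠ u3) (h14 : u1 ≠ u4)
    (h23 : u2 ≠ u3) (h24 : u2 ≠ u4) (h34 : u3 ≠ u4)
    (s1 s2 s3 : F)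
    (hs1 : s1 = u1 + u2 + u3 + u4)
    (hs2 : s2 = u1 * u2 + u1 * u3 + u1 * u4 + u2 * u3 + u2 * u4 + u3 * u4)
    (hs3 : s3 = u1 * u2 * u3 + u1 * u2 * u4 + u1 * u3 * u4 + u2 * u3 * u4) :
    s1 ≠ 0 ∧ s3 ≠ 0 ∧
    ∀ u ∈ ({u1, u2, u3, u4} : Set F), s3 + u * s2 ≠ 0 ∧ s2 + u * s1 ≠ 0 :=
  stmt_14_general m F hF u1 u2 u3 u4 h1 h2 h3 h4 h12 h13 h14 h23 h24 h34 s1 s2 s3 hs1 hs2 hs3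
end

section
/- Let q = 2^m and let γ be a primitive (q+1)-st root of unity in GF(q^2). For (a, b, c) ∈ GF(q^2)^3 nonzero, let f(u) = Tr_{GF(q^2)/GF(q)}(a u^3 + b u^2 + c u) and let Z(f) = {u ∈ U_{q+1} : f(u) = 0}, where U_{q+1} is the set of (q+1)-st roots of unity. Then |Z(f)| ≤ 6. -/
/-!
On the unit circle `u ^ (q + 1) = 1` the Frobenius `u ↦ u ^ q` is inversion, so multiplying
`Tr (a u³ + b u² + c u) = (a u³ + b u² + c u) + (a u³ + b u² + c u) ^ q` by `u³` turns it
into the value at `u` of `a X⁶ + b X⁵ + c X⁴ + c^q X² + b^q X + a^q`. That polynomial is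
nonzero when `(a, b, c) ≠ 0`, so it has at most six roots.
-/

open Polynomial

noncomputable def cubicTracePoly {R : Type*} [CommRing R] (q : ℕ) (a b c : R) : R[X] :=
  C a * X ^ 6 + C b * X ^ 5 + C c * X ^ 4 + C (c ^ q) * X ^ 2 + C (b ^ q) * X + C (a ^ q)

section CommRing

variable {R : Type*} [CommRing R]

lemma cubicTracePoly_natDegree_le (q : ℕ) (a b c : R) :
    (cubicTracePoly q a b c).natDegree ≤ 6 := by
  unfold cubicTracePoly
  compute_degree

lemma cubicTracePoly_ne_zero {q : ℕ} {a b c : R} (habc : (a, b, c) ≠ (0, 0, 0)) :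
    cubicTracePoly q a b c ≠ 0 := by
  intro h
  have hcoeff : ∀ k, (cubicTracePoly q a b c).coeff k = 0 := by simp [h]
  have h6 := hcoeff 6
  have h5 := hcoeff 5
  have h4 := hcoeff 4
  simp only [cubicTracePoly, coeff_add, coeff_C_mul, coeff_X_pow, coeff_C, coeff_X] at h6 h5 h4
  norm_num at h6 h5 h4
  exact habc (by simp [h6, h5, h4])

lemma cubicTracePoly_eval {p : ℕ} [ExpChar R p] (n : ℕ) (a b c : R) {u : R}
    (hu : u ^ (p ^ n + 1) = 1) :
    (cubicTracePoly (p ^ n) a b c).eval u =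
      u ^ 3 * ((a * u ^ 3 + b * u ^ 2 + c * u) + (a * u ^ 3 + b * u ^ 2 + c * u) ^ (p ^ n)) := by
  have hfrob : (a * u ^ 3 + b * u ^ 2 + c * u) ^ (p ^ n)
      = a ^ p ^ n * (u ^ p ^ n) ^ 3 + b ^ p ^ n * (u ^ p ^ n) ^ 2 + c ^ p ^ n * u ^ p ^ n := by
    simp only [add_pow_expChar_pow, mul_pow, ← pow_mul, mul_comm]
  rw [pow_succ] at hu
  simp only [cubicTracePoly, eval_add, eval_mul, eval_pow, eval_C, eval_X, hfrob]
  linear_combination -(a ^ p ^ n * ((u ^ p ^ n * u) ^ 2 + u ^ p ^ n * u + 1)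
    + b ^ p ^ n * u * (u ^ p ^ n * u + 1) + c ^ p ^ n * u ^ 2) * hu

end CommRing

theorem ncard_unitCircle_cubic_trace_zeros_le_six {F : Type*} [Field F] {p : ℕ} [ExpChar F p]
    (n : ℕ) {a b c : F} (habc : (a, b, c) ≠ (0, 0, 0)) :
    Set.ncard {u : F | u ^ (p ^ n + 1) = 1 ∧
      (a * u ^ 3 + b * u ^ 2 + c * u) + (a * u ^ 3 + b * u ^ 2 + c * u) ^ (p ^ n) = 0} ≤ 6 := by
  have hP := cubicTracePoly_ne_zero (q := p ^ n) habc
  refine le_trans (Set.ncard_le_ncard fun u ⟨hu, htr⟩ ↦ ?_) <|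
    (ncard_rootSet_le (cubicTracePoly (p ^ n) a b c) F).trans (cubicTracePoly_natDegree_le _ a b c)
  rw [mem_rootSet_of_ne hP, coe_aeval_eq_eval, cubicTracePoly_eval n a b c hu, htr, mul_zero]

theorem stmt_17_general (m : ℕ) (F : Type*) [Field F] [Fintype F]
    (hF : Fintype.card F = 2 ^ (2 * m))
    (a b c : F) (habc : (a, b, c) ≠ (0, 0, 0)) :
    Set.ncard {u : F | u ^ (2 ^ m + 1) = 1 ∧
      (a * u ^ 3 + b * u ^ 2 + c * u) + (a * u ^ 3 + b * u ^ 2 + c * u) ^ (2 ^ m) = 0}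
      ≤ 6 := by
  have : Fact (Nat.Prime 2) := ⟨Nat.prime_two⟩
  have : CharP F 2 := charP_of_card_eq_prime_pow hF
  exact ncard_unitCircle_cubic_trace_zeros_le_six m habc

/-- For `q = 2^m` and `(a,b,c) ∈ GF(q^2)^3` nonzero, the function
`f(u) = Tr_{GF(q^2)/GF(q)}(a·u^3 + b·u^2 + c·u) = x + x^q` with `x = a·u^3+b·u^2+c·u`
has at most 6 zeros among the `(q+1)`-st roots of unity. -/
theorem stmt_17 (m : ℕ) (hm : 0 < m) (F : Type*) [Field F] [Fintype F]
    (hF : Fintype.card F = 2 ^ (2 * m))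
    (a b c : F) (habc : (a, b, c) ≠ (0, 0, 0)) :
    Set.ncard {u : F | u ^ (2 ^ m + 1) = 1 ∧
      (a * u ^ 3 + b * u ^ 2 + c * u) + (a * u ^ 3 + b * u ^ 2 + c * u) ^ (2 ^ m) = 0}
      ≤ 6 :=
  stmt_17_general m F hF a b c habc
end
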